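/- Let (Ā, B̄) be an interconnected structural system with subsystems (Ā_1, B̄_1), …, (Ā_r, B̄_r) and interconnection patterns Ē_{i,j}. Every non-top linked SCC of the overall system digraph D(Ā, B̄) contains at least one non-top linked SCC of some subsystem digraph D(Ā_i, B̄_i). Consequently, if for each i every non-top linked SCC of D(Ā_i, B̄_i) consists of input vertices, then every non-top linked SCC of D(Ā, B̄) contains an input vertex. -/

import Mathlib

/-!
Every vertex of a finite digraph is reached from some non-top linked SCC: take, among its
ancestors, one `u` whose own ancestor set is smallest; any ancestor of `u` then has the same
ancestor set, so it reaches `u` back, and the class of `u` under mutual reachability is a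
non-top linked SCC. Each subsystem digraph embeds into the overall one, so a non-top linked
SCC of a subsystem from which some vertex of a non-top linked SCC `S` of the overall digraph is
reached lands inside `S`, because `S` is closed under ancestors.
-/

open Matrix

/-- Controllability matrix `[B, AB, …, A^{n-1}B]` (columns indexed by `Fin (card X) × U`). -/
def ctrbMatrix {X U : Type*} [Fintype X] [DecidableEq X]
    (A : Matrix X X ℝ) (B : Matrix X U ℝ) :
    Matrix X (Fin (Fintype.card X) × U) ℝ :=
  fun i kj => (A ^ (kj.1 : ℕ) * B) i kj.2

/-- A real pair `(A,B)` is controllable if its controllability matrix has full rank. -/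
def Controllable {X U : Type*} [Fintype X] [DecidableEq X] [Fintype U]
    (A : Matrix X X ℝ) (B : Matrix X U ℝ) : Prop :=
  (ctrbMatrix A B).rank = Fintype.card X

/-- `M` has the same sparsity pattern as the Boolean matrix `Mb`. -/
def SameSparsity {X Y : Type*} (M : Matrix X Y ℝ) (Mb : Matrix X Y Bool) : Prop :=
  ∀ i j, M i j = 0 ↔ Mb i j = false

/-- Structural controllability of a structural (Boolean) pair. -/
def StructurallyControllable {X U : Type*} [Fintype X] [DecidableEq X] [Fintype U]
    (Ab : Matrix X X Bool) (Bb : Matrix X U Bool) : Prop :=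
  ∃ A : Matrix X X ℝ, ∃ B : Matrix X U ℝ,
    SameSparsity A Ab ∧ SameSparsity B Bb ∧ Controllable A B

/-- Edge relation of the system digraph `D(Ā,B̄)`. -/
def sysDigraphRel {X U : Type*} (Ab : Matrix X X Bool) (Bb : Matrix X U Bool) :
    (X ⊕ U) → (X ⊕ U) → Prop :=
  fun v w => match v, w with
  | Sum.inl j, Sum.inl i => Ab i j = true
  | Sum.inr k, Sum.inl i => Bb i k = true
  | _, Sum.inr _ => False

/-- A state vertex is input-reachable if some input vertex has a directed path to it. -/
def InputReachable {X U : Type*} (Ab : Matrix X X Bool) (Bb : Matrix X U Bool) (x : X) : Prop :=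
  ∃ u : U, Relation.ReflTransGen (sysDigraphRel Ab Bb) (Sum.inr u) (Sum.inl x)

/-- Edge relation of the system bipartite graph `B(Ā,B̄)` (left = states ⊕ inputs, right = states). -/
def sysBipEdge {X U : Type*} (Ab : Matrix X X Bool) (Bb : Matrix X U Bool) :
    (X ⊕ U) → X → Prop :=
  fun v i => match v with
  | Sum.inl j => Ab i j = true
  | Sum.inr k => Bb i k = true

/-- Edge relation of the state bipartite graph `B(Ā)`. -/
def stateBipEdge {X : Type*} (Ab : Matrix X X Bool) : X → X → Prop :=
  fun j i => Ab i j = true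

/-- A matching of a bipartite graph with edge relation `E`: a set of edges sharing no
left vertex and no right vertex. -/
def IsMatching {α β : Type*} (E : α → β → Prop) (M : Set (α × β)) : Prop :=
  (∀ e ∈ M, E e.1 e.2) ∧
  (∀ e ∈ M, ∀ f ∈ M, e.1 = f.1 → e = f) ∧
  (∀ e ∈ M, ∀ f ∈ M, e.2 = f.2 → e = f)

/-- Right vertices belonging to no edge of `M`. -/
def rightUnmatched {α β : Type*} (M : Set (α × β)) : Set β :=
  {b | ∀ e ∈ M, e.2 ≠ b}

/-- Left vertices belonging to no edge of `M`. -/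
def leftUnmatched {α β : Type*} (M : Set (α × β)) : Set α :=
  {a | ∀ e ∈ M, e.1 ≠ a}

/-- A maximum matching: a matching of the largest cardinality. -/
def IsMaxMatching {α β : Type*} (E : α → β → Prop) (M : Set (α × β)) : Prop :=
  IsMatching E M ∧ ∀ M' : Set (α × β), IsMatching E M' → M'.ncard ≤ M.ncard

/-- `S` is a strongly connected component of the digraph with edge relation `R`. -/
def IsSCC {V : Type*} (R : V → V → Prop) (S : Set V) : Prop :=
  S.Nonempty ∧ (∀ u ∈ S, ∀ v ∈ S, Relation.ReflTransGen R u v) ∧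
  ∀ w : V, (∀ u ∈ S, Relation.ReflTransGen R u w ∧ Relation.ReflTransGen R w u) → w ∈ S

/-- An SCC is non-top linked if it has no incoming edge from outside. -/
def NonTopLinked {V : Type*} (R : V → V → Prop) (S : Set V) : Prop :=
  ∀ u v : V, R u v → v ∈ S → u ∈ S

/-- Dynamics pattern `(I_r ⊗ Ā') ∨ (Ē ⊗ H̄)` of a system of `r` similar subsystems. -/
def simA {n : ℕ} (r : ℕ) (A' H : Matrix (Fin n) (Fin n) Bool)
    (E : Matrix (Fin r) (Fin r) Bool) :
    Matrix (Fin r × Fin n) (Fin r × Fin n) Bool :=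
  fun q q' => ((if q.1 = q'.1 then A' q.2 q'.2 else false) || (E q.1 q'.1 && H q.2 q'.2))

/-- Input pattern `I_r ⊗ B̄'` of a system of `r` similar subsystems. -/
def simB {n p : ℕ} (r : ℕ) (B' : Matrix (Fin n) (Fin p) Bool) :
    Matrix (Fin r × Fin n) (Fin r × Fin p) Bool :=
  fun q k => if q.1 = k.1 then B' q.2 k.2 else false

/-- Entrywise OR of Boolean matrices. -/
def orMat {X Y : Type*} (M N : Matrix X Y Bool) : Matrix X Y Bool :=
  fun i j => M i j || N i j

/-- Dynamics pattern of an interconnected system: diagonal blocks `Ā_i`,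
off-diagonal blocks `Ē_{i,j}`. -/
def interA {r : ℕ} {n : Fin r → ℕ}
    (A : ∀ i, Matrix (Fin (n i)) (Fin (n i)) Bool)
    (E : ∀ i j, Matrix (Fin (n i)) (Fin (n j)) Bool) :
    Matrix (Σ i, Fin (n i)) (Σ i, Fin (n i)) Bool :=
  fun q q' => if h : q'.1 = q.1 then A q.1 q.2 (h ▸ q'.2) else E q.1 q'.1 q.2 q'.2

/-- Input pattern of an interconnected system: block diagonal with blocks `B̄_i`. -/
def interB {r : ℕ} {n p : Fin r → ℕ}
    (B : ∀ i, Matrix (Fin (n i)) (Fin (p i)) Bool) :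
    Matrix (Σ i, Fin (n i)) (Σ i, Fin (p i)) Bool :=
  fun q k => if h : k.1 = q.1 then B q.1 q.2 (h ▸ k.2) else false

open Relation

section Digraph

variable {V W : Type*} {R : V → V → Prop}

theorem NonTopLinked.mem_of_reflTransGen {S : Set V} (hS : NonTopLinked R S) {u w : V}
    (h : ReflTransGen R u w) (hw : w ∈ S) : u ∈ S := by
  induction h using ReflTransGen.head_induction_on with
  | refl => exact hw
  | head huv _ ih => exact hS _ _ huv ih

theorem isSCC_setOf_mutuallyReachable (u : V) :
    IsSCC R {w | ReflTransGen R u w ∧ ReflTransGen R w u} :=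
  ⟨⟨u, .refl, .refl⟩, fun _ ha _ hb => ha.2.trans hb.1,
    fun _ hw => hw u ⟨.refl, .refl⟩⟩

theorem exists_isSCC_nonTopLinked_reflTransGen [Finite V] (R : V → V → Prop) (v : V) :
    ∃ T : Set V, IsSCC R T ∧ NonTopLinked R T ∧ ∀ w ∈ T, ReflTransGen R w v := by
  let ancestors : V → Set V := fun x => {w | ReflTransGen R w x}
  obtain ⟨u, huv, hmin⟩ := Set.exists_min_image (ancestors v) (fun x => (ancestors x).ncard)
    (Set.toFinite _) ⟨v, .refl⟩
  refine ⟨_, isSCC_setOf_mutuallyReachable u, fun a b hab hb => ?_,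
    fun w hw => hw.2.trans huv⟩
  have hau : ReflTransGen R a u := (ReflTransGen.single hab).trans hb.2
  have hsub : ancestors a ⊆ ancestors u := fun w hw => hw.trans hau
  have heq : ancestors a = ancestors u :=
    Set.eq_of_subset_of_ncard_le hsub (hmin a (hau.trans huv)) (Set.toFinite _)
  have hua : u ∈ ancestors a := heq ▸ ReflTransGen.refl
  exact ⟨hua, hau⟩

theorem exists_isSCC_nonTopLinked_image_subset [Finite V] {R' : W → W → Prop} (f : V → W)
    (hf : ∀ a b, R a b → R' (f a) (f b)) {S : Set W} (hS : NonTopLinked R' S) {v : V}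
    (hv : f v ∈ S) : ∃ T : Set V, IsSCC R T ∧ NonTopLinked R T ∧ f '' T ⊆ S := by
  obtain ⟨T, hT, hTntl, hreach⟩ := exists_isSCC_nonTopLinked_reflTransGen R v
  refine ⟨T, hT, hTntl, ?_⟩
  rintro _ ⟨w, hw, rfl⟩
  exact hS.mem_of_reflTransGen ((hreach w hw).lift f hf) hv

end Digraph

section Interconnected

variable {r : ℕ} {n p : Fin r → ℕ}

theorem sysDigraphRel_interA_interB_map (A : ∀ i, Matrix (Fin (n i)) (Fin (n i)) Bool)
    (B : ∀ i, Matrix (Fin (n i)) (Fin (p i)) Bool)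
    (E : ∀ i j, Matrix (Fin (n i)) (Fin (n j)) Bool) (i : Fin r)
    {a b : Fin (n i) ⊕ Fin (p i)} (h : sysDigraphRel (A i) (B i) a b) :
    sysDigraphRel (interA A E) (interB B)
      (Sum.map (Sigma.mk i) (Sigma.mk i) a) (Sum.map (Sigma.mk i) (Sigma.mk i) b) := by
  cases a <;> cases b <;> simp_all [sysDigraphRel, interA, interB]

theorem exists_sum_map_sigmaMk_eq (v : (Σ i, Fin (n i)) ⊕ (Σ i, Fin (p i))) :
    ∃ i : Fin r, ∃ w : Fin (n i) ⊕ Fin (p i), Sum.map (Sigma.mk i) (Sigma.mk i) w = v := by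
  rcases v with ⟨i, x⟩ | ⟨i, u⟩
  · exact ⟨i, .inl x, rfl⟩
  · exact ⟨i, .inr u, rfl⟩

theorem exists_subsystem_nonTopLinked_SCC_image_subset
    (A : ∀ i, Matrix (Fin (n i)) (Fin (n i)) Bool)
    (B : ∀ i, Matrix (Fin (n i)) (Fin (p i)) Bool)
    (E : ∀ i j, Matrix (Fin (n i)) (Fin (n j)) Bool)
    {S : Set ((Σ i, Fin (n i)) ⊕ (Σ i, Fin (p i)))}
    (hS : IsSCC (sysDigraphRel (interA A E) (interB B)) S)
    (hSntl : NonTopLinked (sysDigraphRel (interA A E) (interB B)) S) :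
    ∃ i : Fin r, ∃ T : Set (Fin (n i) ⊕ Fin (p i)),
      IsSCC (sysDigraphRel (A i) (B i)) T ∧
      NonTopLinked (sysDigraphRel (A i) (B i)) T ∧
      (Sum.map (Sigma.mk i) (Sigma.mk i)) '' T ⊆ S := by
  obtain ⟨v, hv⟩ := hS.1
  obtain ⟨i, w, rfl⟩ := exists_sum_map_sigmaMk_eq v
  exact ⟨i, exists_isSCC_nonTopLinked_image_subset (Sum.map (Sigma.mk i) (Sigma.mk i))
    (fun _ _ => sysDigraphRel_interA_interB_map A B E i) hSntl hv⟩

end Interconnected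

theorem interconnected_nonTopLinked_SCC
    {r : ℕ} {n p : Fin r → ℕ}
    (A : ∀ i, Matrix (Fin (n i)) (Fin (n i)) Bool)
    (B : ∀ i, Matrix (Fin (n i)) (Fin (p i)) Bool)
    (E : ∀ i j, Matrix (Fin (n i)) (Fin (n j)) Bool) :
    (∀ S : Set ((Σ i, Fin (n i)) ⊕ (Σ i, Fin (p i))),
      IsSCC (sysDigraphRel (interA A E) (interB B)) S →
      NonTopLinked (sysDigraphRel (interA A E) (interB B)) S →
      ∃ i : Fin r, ∃ T : Set (Fin (n i) ⊕ Fin (p i)),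
        IsSCC (sysDigraphRel (A i) (B i)) T ∧
        NonTopLinked (sysDigraphRel (A i) (B i)) T ∧
        (Sum.map (Sigma.mk i) (Sigma.mk i)) '' T ⊆ S) ∧
    ((∀ i : Fin r, ∀ T : Set (Fin (n i) ⊕ Fin (p i)),
        IsSCC (sysDigraphRel (A i) (B i)) T → NonTopLinked (sysDigraphRel (A i) (B i)) T →
        ∀ v ∈ T, ∃ u : Fin (p i), v = Sum.inr u) →
      ∀ S : Set ((Σ i, Fin (n i)) ⊕ (Σ i, Fin (p i))),
        IsSCC (sysDigraphRel (interA A E) (interB B)) S →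
        NonTopLinked (sysDigraphRel (interA A E) (interB B)) S →
        ∃ u : Σ i, Fin (p i), Sum.inr u ∈ S) := by
  refine ⟨fun S hS hSntl => exists_subsystem_nonTopLinked_SCC_image_subset A B E hS hSntl,
    fun hinputs S hS hSntl => ?_⟩
  obtain ⟨i, T, hT, hTntl, hTS⟩ := exists_subsystem_nonTopLinked_SCC_image_subset A B E hS hSntl
  obtain ⟨v, hv⟩ := hT.1
  obtain ⟨u, rfl⟩ := hinputs i T hT hTntl v hv
  exact ⟨⟨i, u⟩, hTS ⟨.inr u, hv, rfl⟩⟩
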